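/- Let G be a group that is nilpotent of class at most 3 (i.e. every triple commutator ⁅⁅x,y⁆,z⁆ lies in the center Z(G)). Then every loop commutator °⁅x,y⁆ = (y∘x)·(x∘y)·(y∘x)⁻² lies in the center Z(°G) of the associated gyrogroup (i.e. satisfies both the commutant condition (°⁅x,y⁆·z)³ = °⁅x,y⁆³·z³ for all z ∈ G and the nucleus condition ⁅u,⁅°⁅x,y⁆, v⁻¹⁆⁆ = 1 for all u,v ∈ G) for all x,y ∈ G if and only if ⁅x,y⁆³ satisfies the commutant condition (⁅x,y⁆³·z)³ = ⁅x,y⁆⁹·z³ for all z ∈ G, for all x,y ∈ G. (Equivalently: °G is a nilpotent loop of class 2 if and only if ⁅x,y⁆³ ∈ C(°G) for all x,y ∈ G.) -/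

import Mathlib

/-!
If `⁅x, y⁆` is central, then `x ∘ y = ⁅x, y⁆ · xy` and `y ∘ x = ⁅x, y⁆⁻² · xy`, whence
`°⁅x, y⁆ = ⁅x, y⁆³`. Applied in `G / Z(G)`, which has class at most 2, this gives
`°⁅x, y⁆ = ⁅x, y⁆³ · w` with `w ∈ Z(G)`. So `°⁅x, y⁆` lies in the second center, which makes the
nucleus condition automatic, and the commutant condition `(az)³ = a³z³` is insensitive to
multiplying `a` by a central element.
-/

/-- The gyrogroup operation associated with a group: `x ∘ y = y⁻¹ * x * y²`. -/
def gyrOp {G : Type*} [Group G] (x y : G) : G := y⁻¹ * x * y ^ 2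

/-- The loop commutator of the associated gyrogroup:
`°⁅x,y⁆ = (y∘x)·(x∘y)·(y∘x)⁻²`. -/
def loopComm {G : Type*} [Group G] (x y : G) : G :=
  gyrOp y x * gyrOp x y * (gyrOp y x ^ 2)⁻¹

open scoped commutatorElement

/-- The commutant `C(°G)` of the gyrogroup `°G`. -/
def gyroCommutant (G : Type*) [Group G] : Set G :=
  {a | ∀ z : G, (a * z) ^ 3 = a ^ 3 * z ^ 3}

section

variable {G H : Type*} [Group G] [Group H]

theorem map_gyrOp (f : G →* H) (x y : G) : f (gyrOp x y) = gyrOp (f x) (f y) := by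
  simp [gyrOp]

theorem map_loopComm (f : G →* H) (x y : G) : f (loopComm x y) = loopComm (f x) (f y) := by
  simp [loopComm, map_gyrOp]

theorem gyrOp_eq_commutatorElement_mul {x y : G} (h : ⁅x, y⁆ ∈ Subgroup.center G) :
    gyrOp x y = ⁅x, y⁆ * (x * y) := by
  calc gyrOp x y = y⁻¹ * (⁅x, y⁆ * y) * (x * y) := by
        rw [commutatorElement_def, gyrOp, pow_two]; group
    _ = ⁅x, y⁆ * (x * y) := by rw [← Subgroup.mem_center_iff.mp h y, inv_mul_cancel_left]

theorem loopComm_eq_commutatorElement_pow_three {x y : G} (h : ⁅x, y⁆ ∈ Subgroup.center G) :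
    loopComm x y = ⁅x, y⁆ ^ 3 := by
  have hyx : gyrOp y x = ⁅x, y⁆⁻¹ ^ 2 * (x * y) := by
    have hinv : ⁅y, x⁆ = ⁅x, y⁆⁻¹ := (commutatorElement_inv x y).symm
    rw [gyrOp_eq_commutatorElement_mul (hinv ▸ inv_mem h), hinv, pow_two, mul_assoc]
    congr 1
    rw [commutatorElement_def]; group
  rw [loopComm, hyx, gyrOp_eq_commutatorElement_mul h]
  generalize x * y = g
  generalize ⁅x, y⁆ = k at h ⊢
  have hk : Commute k g := (Subgroup.mem_center_iff.mp h g).symm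
  calc k⁻¹ ^ 2 * g * (k * g) * ((k⁻¹ ^ 2 * g) ^ 2)⁻¹
      = k⁻¹ ^ 2 * (g * k) * g * ((k⁻¹ ^ 2) ^ 2 * g ^ 2)⁻¹ := by
        rw [(hk.inv_left.pow_left 2).mul_pow]; group
    _ = k ^ 3 := by rw [← hk.eq]; group

theorem mem_upperCentralSeries_two_iff {a : G} :
    a ∈ Subgroup.upperCentralSeries G 2 ↔ ∀ z : G, ⁅a, z⁆ ∈ Subgroup.center G := by
  rw [Subgroup.mem_upperCentralSeries_succ_iff, Subgroup.upperCentralSeries_one]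

theorem commutatorElement_commutatorElement_eq_one {a : G}
    (ha : a ∈ Subgroup.upperCentralSeries G 2) (u v : G) : ⁅u, ⁅a, v⁆⁆ = 1 :=
  commutatorElement_eq_one_iff_commute.mpr
    (Subgroup.mem_center_iff.mp (mem_upperCentralSeries_two_iff.mp ha v) u)

theorem inv_commutatorElement_pow_three_mul_loopComm_mem_center {x y : G}
    (h : ⁅x, y⁆ ∈ Subgroup.upperCentralSeries G 2) :
    (⁅x, y⁆ ^ 3)⁻¹ * loopComm x y ∈ Subgroup.center G := by
  let f := QuotientGroup.mk' (Subgroup.center G)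
  have hf : ⁅f x, f y⁆ ∈ Subgroup.center (G ⧸ Subgroup.center G) := by
    have : ⁅x, y⁆ ∈ Subgroup.upperCentralSeriesStep (Subgroup.center G) := by
      rwa [Subgroup.mem_upperCentralSeriesStep, ← mem_upperCentralSeries_two_iff]
    rwa [Subgroup.upperCentralSeriesStep_eq_comap_center, Subgroup.mem_comap,
      map_commutatorElement] at this
  rw [← QuotientGroup.eq]
  change f (⁅x, y⁆ ^ 3) = f (loopComm x y)
  rw [map_loopComm, map_pow, map_commutatorElement, loopComm_eq_commutatorElement_pow_three hf]

theorem loopComm_mem_upperCentralSeries_two {x y : G}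
    (h : ⁅x, y⁆ ∈ Subgroup.upperCentralSeries G 2) :
    loopComm x y ∈ Subgroup.upperCentralSeries G 2 := by
  have hw := inv_commutatorElement_pow_three_mul_loopComm_mem_center h
  rw [← Subgroup.upperCentralSeries_one] at hw
  simpa using mul_mem (pow_mem h 3) (Subgroup.upperCentralSeries_mono G one_le_two hw)

theorem mul_mem_gyroCommutant_iff {w : G} (hw : w ∈ Subgroup.center G) (a : G) :
    a * w ∈ gyroCommutant G ↔ a ∈ gyroCommutant G := by
  have hw' : ∀ g, Commute w g := fun g => (Subgroup.mem_center_iff.mp hw g).symm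
  refine forall_congr' fun z => ?_
  have lhs : (a * w * z) ^ 3 = (a * z) ^ 3 * w ^ 3 := by
    rw [mul_assoc, (hw' z).eq, ← mul_assoc, (hw' _).symm.mul_pow]
  have rhs : (a * w) ^ 3 * z ^ 3 = a ^ 3 * z ^ 3 * w ^ 3 := by
    rw [(hw' a).symm.mul_pow, mul_assoc, ((hw' _).pow_left 3).eq, ← mul_assoc]
  rw [lhs, rhs, mul_left_inj]

end

theorem loopComm_central_iff_cube_commutator_in_commutant {G : Type*} [Group G]
    (h3 : ∀ x y z : G, ⁅⁅x, y⁆, z⁆ ∈ Subgroup.center G) :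
    (∀ x y : G,
      (∀ z : G, (loopComm x y * z) ^ 3 = (loopComm x y) ^ 3 * z ^ 3) ∧
      (∀ u v : G, ⁅u, ⁅loopComm x y, v⁻¹⁆⁆ = 1)) ↔
    (∀ x y : G, ∀ z : G, (⁅x, y⁆ ^ 3 * z) ^ 3 = ⁅x, y⁆ ^ 9 * z ^ 3) := by
  refine forall₂_congr fun x y => ?_
  have h2 : ⁅x, y⁆ ∈ Subgroup.upperCentralSeries G 2 := mem_upperCentralSeries_two_iff.mpr (h3 x y)
  have hnucleus : ∀ u v : G, ⁅u, ⁅loopComm x y, v⁻¹⁆⁆ = 1 := fun u v =>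
    commutatorElement_commutatorElement_eq_one (loopComm_mem_upperCentralSeries_two h2) u v⁻¹
  have hcommutant : loopComm x y ∈ gyroCommutant G ↔ ⁅x, y⁆ ^ 3 ∈ gyroCommutant G := by
    have := mul_mem_gyroCommutant_iff
      (inv_commutatorElement_pow_three_mul_loopComm_mem_center h2) (⁅x, y⁆ ^ 3)
    rwa [mul_inv_cancel_left] at this
  simp only [hnucleus, implies_true, and_true]
  simpa only [gyroCommutant, Set.mem_ofPred_eq, ← pow_mul] using hcommutant
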